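/- Under the stated hypotheses, the perturbed forms are nonnegative: Ŝ_n(u_n, u_n) ≥ 0 for every n ≥ 1 and every u_n ∈ D(S_n), and Ŝ(u, u) ≥ 0 for every u ∈ D(S). -/

import Mathlib

open MeasureTheory Filter Topology

noncomputable section

namespace Mosco

variable {E : Type*} [MeasurableSpace E]

/-- The inner product of two real-valued functions with respect to a measure,
`⟨φ, ψ⟩ = ∫ φ ψ dμ`. -/
def ip (μ : Measure E) (φ ψ : E → ℝ) : ℝ := ∫ x, φ x * ψ x ∂μ

/-- The measure-theoretic framework: mutually singular probability measures `ν n`,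
`n : ℕ` (`ν 0` playing the role of the limit measure `ν`), such that `L²(E, ν 0)` is
separable, together with disjoint sets `En n` carrying `ν n`. -/
structure Frame0 (E : Type*) [MeasurableSpace E] where
  ν : ℕ → Measure E
  prob : ∀ n, IsProbabilityMeasure (ν n)
  singular : ∀ m n, m ≠ n → (ν m).MutuallySingular (ν n)
  separableL2 : TopologicalSpace.SeparableSpace (Lp ℝ 2 (ν 0))
  En : ℕ → Set E
  measEn : ∀ n, MeasurableSet (En n)
  disjEn : ∀ m n, m ≠ n → Disjoint (En m) (En n)
  nullEn : ∀ n, ν n (En n)ᶜ = 0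

open Classical

/-- The `L²(μ)`-class of a function (zero if the function is not square-integrable). -/
def toL2 (μ : Measure E) (φ : E → ℝ) : Lp ℝ 2 μ :=
  if h : MemLp φ 2 μ then h.toLp φ else 0

/-- A strongly continuous semigroup of bounded linear operators on `L²(E, μ)`. -/
structure Semigroup2 {E : Type*} [MeasurableSpace E] (μ : Measure E) where
  T : ℝ → Lp ℝ 2 μ →L[ℝ] Lp ℝ 2 μ
  T_zero : T 0 = ContinuousLinearMap.id ℝ (Lp ℝ 2 μ)
  T_add : ∀ s t : ℝ, 0 ≤ s → 0 ≤ t → T (s + t) = (T s).comp (T t)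
  strongCont : ∀ f : Lp ℝ 2 μ, Tendsto (fun t => T t f) (𝓝[≥] (0:ℝ)) (𝓝 f)

namespace Semigroup2

variable {μ : Measure E}

/-- The semigroup is a contraction semigroup. -/
def IsContraction (sg : Semigroup2 μ) : Prop := ∀ t : ℝ, 0 ≤ t → ‖sg.T t‖ ≤ 1

/-- The adjoint (dual) semigroup `T'`. -/
def dual (sg : Semigroup2 μ) (t : ℝ) : Lp ℝ 2 μ →L[ℝ] Lp ℝ 2 μ :=
  ContinuousLinearMap.adjoint (sg.T t)

/-- Membership in the domain `D(A)` of the generator. -/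
def memDom (sg : Semigroup2 μ) (f : Lp ℝ 2 μ) : Prop :=
  ∃ g : Lp ℝ 2 μ, Tendsto (fun t : ℝ => t⁻¹ • (sg.T t f - f)) (𝓝[>] (0:ℝ)) (𝓝 g)

/-- The generator `A` (zero off its domain). -/
def gen (sg : Semigroup2 μ) (f : Lp ℝ 2 μ) : Lp ℝ 2 μ :=
  if h : sg.memDom f then Exists.choose h else 0

/-- Membership in the domain `D(A')` of the adjoint generator. -/
def memDom' (sg : Semigroup2 μ) (f : Lp ℝ 2 μ) : Prop :=
  ∃ g : Lp ℝ 2 μ, Tendsto (fun t : ℝ => t⁻¹ • (sg.dual t f - f)) (𝓝[>] (0:ℝ)) (𝓝 g)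

/-- The adjoint generator `A'` (zero off its domain). -/
def gen' (sg : Semigroup2 μ) (f : Lp ℝ 2 μ) : Lp ℝ 2 μ :=
  if h : sg.memDom' f then Exists.choose h else 0

/-- The resolvent `G_β = (β - A)⁻¹ = ∫_0^∞ e^{-βt} T_t dt`. -/
def res (sg : Semigroup2 μ) (β : ℝ) (f : Lp ℝ 2 μ) : Lp ℝ 2 μ :=
  ∫ t in Set.Ioi (0:ℝ), Real.exp (-β * t) • sg.T t f

/-- The adjoint resolvent `G'_β`. -/
def res' (sg : Semigroup2 μ) (β : ℝ) (f : Lp ℝ 2 μ) : Lp ℝ 2 μ :=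
  ∫ t in Set.Ioi (0:ℝ), Real.exp (-β * t) • sg.dual t f

/-- `u ∈ D(A) = D(S)`, at the level of functions. -/
def memD (sg : Semigroup2 μ) (u : E → ℝ) : Prop := sg.memDom (toL2 μ u)

/-- `u ∈ D(A')`, at the level of functions. -/
def memD' (sg : Semigroup2 μ) (u : E → ℝ) : Prop := sg.memDom' (toL2 μ u)

/-- `A u`, at the level of functions. -/
def Af (sg : Semigroup2 μ) (u : E → ℝ) : E → ℝ := sg.gen (toL2 μ u)

/-- `A' u`, at the level of functions. -/
def Af' (sg : Semigroup2 μ) (u : E → ℝ) : E → ℝ := sg.gen' (toL2 μ u)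

/-- `G_β u`, at the level of functions. -/
def Res (sg : Semigroup2 μ) (β : ℝ) (u : E → ℝ) : E → ℝ := sg.res β (toL2 μ u)

/-- `G'_β u`, at the level of functions. -/
def Res' (sg : Semigroup2 μ) (β : ℝ) (u : E → ℝ) : E → ℝ := sg.res' β (toL2 μ u)

/-- `T_t u`, at the level of functions. -/
def Tf (sg : Semigroup2 μ) (t : ℝ) (u : E → ℝ) : E → ℝ := sg.T t (toL2 μ u)

/-- `T'_t u`, at the level of functions. -/
def Tf' (sg : Semigroup2 μ) (t : ℝ) (u : E → ℝ) : E → ℝ := sg.dual t (toL2 μ u)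

/-- The bilinear form `S(u, v) = ⟨-A u, v⟩` associated with the semigroup. -/
def S (sg : Semigroup2 μ) (u v : E → ℝ) : ℝ := ip μ (fun x => -(sg.Af u x)) v

/-- `S_β(u, v) = β ⟨u, v⟩ + S(u, v)`. -/
def Sb (sg : Semigroup2 μ) (β : ℝ) (u v : E → ℝ) : ℝ := β * ip μ u v + sg.S u v

end Semigroup2

/-- The constant function `1`. -/
def one (E : Type*) : E → ℝ := fun _ => 1

/-- The perturbed form `Ŝ(u, v) = S(u, v) + (1/2) ⟨A'1 · u, v⟩`. -/
def hatS {E : Type*} [MeasurableSpace E] {μ : Measure E} (sg : Semigroup2 μ)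
    (u v : E → ℝ) : ℝ :=
  sg.S u v + (1 / 2) * ip μ (fun x => sg.Af' (one E) x * u x) v

/-!
For bounded measurable `u`, integrating `u y * u x ≤ (u y ^ 2 + u x ^ 2) / 2` first against the
transition kernel `p_t(x, dy)` and then against `ν` gives `⟨T_t u - u, u⟩ ≤ ½ ⟨u², T'_t 1 - 1⟩`.
Dividing by `t` and letting `t → 0` yields `⟨A u, u⟩ ≤ ½ ⟨A'1, u²⟩`, which is `Ŝ(u, u) ≥ 0`.

For `n ≥ 1` the bounded functions are dense in `D(Sₙ)` for the graph norm, and `Ŝₙ(u, u)` is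
graph-norm continuous because `A'ₙ1` is bounded. For `ν` there is no such density, but `T'_t 1` is
bounded, so for fixed `t` the inequality extends by continuity from simple functions to all of
`L²`; the `L^∞` convergence of `(T'_t 1 - 1) / t` then lets one pass to the limit against
`u² ∈ L¹`.
-/


open scoped ENNReal RealInnerProductSpace

section Lp

variable {μ : Measure E}

lemma inner_eq_integral (U V : Lp ℝ 2 μ) : ⟪U, V⟫ = ∫ x, U x * V x ∂μ := by
  simp only [L2.inner_def, RCLike.inner_apply, conj_trivial]
  simp_rw [mul_comm]

lemma coeFn_toL2 {φ : E → ℝ} (h : MemLp φ 2 μ) : toL2 μ φ =ᵐ[μ] φ := by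
  rw [toL2, dif_pos h]
  exact h.coeFn_toLp

lemma toL2_congr {φ ψ : E → ℝ} (h : MemLp φ 2 μ) (hφψ : φ =ᵐ[μ] ψ) : toL2 μ φ = toL2 μ ψ := by
  rw [toL2, toL2, dif_pos h, dif_pos (h.ae_eq hφψ)]
  exact MemLp.toLp_congr _ _ hφψ

lemma toL2_coeFn (U : Lp ℝ 2 μ) : toL2 μ U = U := by
  rw [toL2, dif_pos (Lp.memLp U), Lp.toLp_coeFn]

lemma inner_toL2_left {φ : E → ℝ} (h : MemLp φ 2 μ) (V : Lp ℝ 2 μ) :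
    ⟪toL2 μ φ, V⟫ = ∫ x, φ x * V x ∂μ := by
  rw [inner_eq_integral]
  refine integral_congr_ae ?_
  filter_upwards [coeFn_toL2 h] with x hx
  rw [hx]

lemma inner_toL2_right (U : Lp ℝ 2 μ) {φ : E → ℝ} (h : MemLp φ 2 μ) :
    ⟪U, toL2 μ φ⟫ = ∫ x, U x * φ x ∂μ := by
  rw [real_inner_comm, inner_toL2_left h]
  simp_rw [mul_comm]

lemma inner_toL2_one [IsFiniteMeasure μ] (U : Lp ℝ 2 μ) :
    ⟪U, toL2 μ (one E)⟫ = ∫ x, U x ∂μ := by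
  rw [inner_toL2_right (φ := one E) U (memLp_const 1)]
  simp [one]

lemma ip_self_eq_norm_sq {φ : E → ℝ} {V : Lp ℝ 2 μ} (h : φ =ᵐ[μ] V) : ip μ φ φ = ‖V‖ ^ 2 := by
  rw [ip, ← real_inner_self_eq_norm_sq, inner_eq_integral]
  refine integral_congr_ae ?_
  filter_upwards [h] with x hx
  rw [hx]

lemma _root_.MeasureTheory.MemLp.ae_abs_le_eLpNorm_top {g : E → ℝ} (hg : MemLp g ∞ μ) :
    ∀ᵐ x ∂μ, |g x| ≤ (eLpNorm g ∞ μ).toReal := by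
  filter_upwards [enorm_ae_le_eLpNormEssSup g μ] with x hx
  rw [eLpNorm_exponent_top]
  have := ENNReal.toReal_mono (by simpa [eLpNorm_exponent_top] using hg.2.ne) hx
  simpa [Real.norm_eq_abs] using this

lemma _root_.MeasureTheory.MemLp.exists_bounded_measurable_ae_eq {g : E → ℝ}
    (hg : MemLp g ∞ μ) : ∃ v : E → ℝ, Measurable v ∧ (∃ C, ∀ x, |v x| ≤ C) ∧ g =ᵐ[μ] v := by
  set C := (eLpNorm g ∞ μ).toReal
  have hC : 0 ≤ C := ENNReal.toReal_nonneg
  refine ⟨fun x => max (-C) (min (hg.1.mk g x) C),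
    measurable_const.max (hg.1.stronglyMeasurable_mk.measurable.min measurable_const),
    ⟨C, fun x => abs_le.2 ⟨le_max_left _ _, max_le (by linarith) (min_le_right _ _)⟩⟩, ?_⟩
  filter_upwards [hg.1.ae_eq_mk, hg.ae_abs_le_eLpNorm_top] with x hmk hC
  rw [← hmk, min_eq_left (abs_le.1 hC).2, max_eq_right (abs_le.1 hC).1]

lemma continuous_integral_sq_mul {g : E → ℝ} (hg : MemLp g ∞ μ) :
    Continuous fun U : Lp ℝ 2 μ => ∫ x, U x ^ 2 * g x ∂μ := by
  set M := (ContinuousLinearMap.mul ℝ ℝ).holderL μ ∞ 2 2 (hg.toLp g)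
  have hM : (fun U : Lp ℝ 2 μ => ∫ x, U x ^ 2 * g x ∂μ) = fun U => ⟪U, M U⟫ := by
    ext U
    rw [inner_eq_integral]
    refine integral_congr_ae ?_
    filter_upwards [(ContinuousLinearMap.mul ℝ ℝ).coeFn_holder (r := 2) (hg.toLp g) U,
      hg.coeFn_toLp] with x hM hg
    simp only [M, ContinuousLinearMap.holderL_apply_apply, hM, hg,
      ContinuousLinearMap.mul_apply']
    ring
  rw [hM]
  exact continuous_id.inner M.continuous

lemma tendsto_integral_mul_of_tendsto_eLpNorm_top {ι : Type*} {l : Filter ι} {f a : E → ℝ}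
    {g : ι → E → ℝ} (hf : Integrable f μ) (ha : MemLp a ∞ μ)
    (hg : ∀ i, AEStronglyMeasurable (g i) μ)
    (hlim : Tendsto (fun i => eLpNorm (fun x => g i x - a x) ∞ μ) l (𝓝 0)) :
    Tendsto (fun i => ∫ x, f x * g i x ∂μ) l (𝓝 (∫ x, f x * a x ∂μ)) := by
  have hfin : ∀ᶠ i in l, MemLp (fun x => g i x - a x) ∞ μ :=
    (hlim.eventually_lt_const ENNReal.zero_lt_top).mono fun i hi => ⟨(hg i).sub ha.1, hi⟩
  have hbound : Tendsto
      (fun i => (∫ x, |f x| ∂μ) * (eLpNorm (fun x => g i x - a x) ∞ μ).toReal) l (𝓝 0) := by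
    simpa using ((ENNReal.tendsto_toReal ENNReal.zero_ne_top).comp hlim).const_mul
      (∫ x, |f x| ∂μ)
  rw [tendsto_iff_norm_sub_tendsto_zero]
  refine squeeze_zero_norm' ?_ hbound
  filter_upwards [hfin] with i hi
  have hfa : Integrable (fun x => f x * a x) μ := hf.mul_of_top_left ha
  have hfd : Integrable (fun x => f x * (g i x - a x)) μ := hf.mul_of_top_left hi
  have hfg : Integrable (fun x => f x * g i x) μ :=
    (hfd.add hfa).congr (.of_forall fun x => by simp only [Pi.add_apply]; ring)
  rw [norm_norm, ← integral_sub hfg hfa]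
  calc ‖∫ x, f x * g i x - f x * a x ∂μ‖ = ‖∫ x, f x * (g i x - a x) ∂μ‖ := by
        simp only [mul_sub]
    _ ≤ ∫ x, ‖f x * (g i x - a x)‖ ∂μ := norm_integral_le_integral_norm _
    _ ≤ ∫ x, |f x| * (eLpNorm (fun x => g i x - a x) ∞ μ).toReal ∂μ := by
        refine integral_mono_ae hfd.norm (hf.abs.mul_const _) ?_
        filter_upwards [hi.ae_abs_le_eLpNorm_top] with x hx
        rw [norm_mul, Real.norm_eq_abs, Real.norm_eq_abs]
        exact mul_le_mul_of_nonneg_left hx (abs_nonneg _)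
    _ = (∫ x, |f x| ∂μ) * (eLpNorm (fun x => g i x - a x) ∞ μ).toReal :=
        integral_mul_const _ _

end Lp

lemma integral_mul_le_half_sq_add {ν : Measure E} [IsProbabilityMeasure ν] {u : E → ℝ}
    (hu : MemLp u 2 ν) (c : ℝ) : (∫ y, u y ∂ν) * c ≤ (c ^ 2 + ∫ y, u y ^ 2 ∂ν) / 2 := by
  have hi2 := hu.integrable_sq
  calc (∫ y, u y ∂ν) * c = ∫ y, u y * c ∂ν := (integral_mul_const _ _).symm
    _ ≤ ∫ y, (c ^ 2 + u y ^ 2) / 2 ∂ν :=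
        integral_mono ((hu.integrable one_le_two).mul_const c)
          (((integrable_const _).add hi2).div_const 2) fun y => by
            nlinarith [sq_nonneg (u y - c)]
    _ = (c ^ 2 + ∫ y, u y ^ 2 ∂ν) / 2 := by
        rw [integral_div, integral_add (integrable_const _) hi2, integral_const]
        simp

namespace Semigroup2

variable {μ : Measure E} (sg : Semigroup2 μ)

lemma tendsto_gen {U : Lp ℝ 2 μ} (h : sg.memDom U) :
    Tendsto (fun t : ℝ => t⁻¹ • (sg.T t U - U)) (𝓝[>] 0) (𝓝 (sg.gen U)) := by
  rw [gen, dif_pos h]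
  exact h.choose_spec

lemma tendsto_gen' {U : Lp ℝ 2 μ} (h : sg.memDom' U) :
    Tendsto (fun t : ℝ => t⁻¹ • (sg.dual t U - U)) (𝓝[>] 0) (𝓝 (sg.gen' U)) := by
  rw [gen', dif_pos h]
  exact h.choose_spec

def IsGivenByKernel (q : ℝ → ProbabilityTheory.Kernel E E) : Prop :=
  ∀ t : ℝ, 0 ≤ t → ∀ f : E → ℝ, Measurable f → (∃ C : ℝ, ∀ x, |f x| ≤ C) →
    sg.Tf t f =ᵐ[μ] fun x => ∫ y, f y ∂(q t x)

lemma inner_gen_le_of_inner_T_sub_le {U : Lp ℝ 2 μ} (hU : sg.memDom U) {φ : ℝ → ℝ} {c : ℝ}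
    (hφ : Tendsto φ (𝓝[>] 0) (𝓝 c)) (h : ∀ t > 0, ⟪sg.T t U - U, U⟫ ≤ t * φ t) :
    ⟪sg.gen U, U⟫ ≤ c := by
  refine le_of_tendsto_of_tendsto ((sg.tendsto_gen hU).inner tendsto_const_nhds) hφ ?_
  filter_upwards [self_mem_nhdsWithin] with t (ht : 0 < t)
  rw [real_inner_smul_left, inv_mul_le_iff₀ ht]
  exact h t ht

variable [IsProbabilityMeasure μ] {sg} {q : ℝ → ProbabilityTheory.Kernel E E}
  [∀ t, ProbabilityTheory.IsMarkovKernel (q t)]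

lemma inner_T_sub_le (hq : sg.IsGivenByKernel q) {t : ℝ} (ht : 0 ≤ t) {u : E → ℝ}
    (hm : Measurable u) {C : ℝ} (hC : ∀ x, |u x| ≤ C) :
    ⟪sg.T t (toL2 μ u) - toL2 μ u, toL2 μ u⟫
      ≤ ⟪toL2 μ (fun x => u x ^ 2), sg.dual t (toL2 μ (one E)) - toL2 μ (one E)⟫ / 2 := by
  have hC2 : ∀ x, |u x ^ 2| ≤ C ^ 2 := fun x => by
    rw [abs_pow]
    exact pow_le_pow_left₀ (abs_nonneg _) (hC x) 2
  have hu2 : MemLp u 2 μ := .of_bound hm.aestronglyMeasurable C (.of_forall hC)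
  have hsq : MemLp (fun x => u x ^ 2) 2 μ :=
    .of_bound (hm.pow_const 2).aestronglyMeasurable _ (.of_forall hC2)
  set U := toL2 μ u
  set SQ := toL2 μ (fun x => u x ^ 2)
  have hpt : ∀ᵐ x ∂μ, sg.T t U x * u x ≤ (u x ^ 2 + sg.T t SQ x) / 2 := by
    filter_upwards [hq t ht u hm ⟨C, hC⟩, hq t ht _ (hm.pow_const 2) ⟨C ^ 2, hC2⟩]
      with x hTu hTsq
    simp only [Tf] at hTu hTsq
    rw [hTu, hTsq]
    exact integral_mul_le_half_sq_add (.of_bound hm.aestronglyMeasurable C (.of_forall hC)) _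
  have hint : ∫ x, sg.T t U x * u x ∂μ ≤ (∫ x, u x ^ 2 ∂μ + ∫ x, sg.T t SQ x ∂μ) / 2 := by
    have hTSQ : Integrable (sg.T t SQ) μ := (Lp.memLp _).integrable one_le_two
    rw [← integral_add hu2.integrable_sq hTSQ, ← integral_div]
    exact integral_mono_ae ((Lp.memLp _).integrable_mul hu2)
      ((hu2.integrable_sq.add hTSQ).div_const 2) hpt
  have hUU : ⟪U, U⟫ = ∫ x, u x ^ 2 ∂μ := by
    rw [inner_toL2_right U hu2]
    refine integral_congr_ae ?_
    filter_upwards [coeFn_toL2 hu2] with x hx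
    rw [hx, sq]
  have hSQ : ⟪SQ, toL2 μ (one E)⟫ = ∫ x, u x ^ 2 ∂μ := by
    rw [inner_toL2_one]
    exact integral_congr_ae (coeFn_toL2 hsq)
  rw [inner_sub_left, inner_sub_right, dual, ContinuousLinearMap.adjoint_inner_right,
    inner_toL2_one, inner_toL2_right _ hu2, hUU, hSQ]
  linarith

lemma inner_T_sub_le_integral (hq : sg.IsGivenByKernel q) {t : ℝ} (ht : 0 ≤ t)
    (hbd : MemLp (sg.Tf' t (one E)) ∞ μ) (U : Lp ℝ 2 μ) :
    ⟪sg.T t U - U, U⟫ ≤ (∫ x, U x ^ 2 * (sg.Tf' t (one E) x - 1) ∂μ) / 2 := by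
  refine (Lp.simpleFunc.denseRange (p := 2) ENNReal.ofNat_ne_top).induction_on U
    (isClosed_le (((sg.T t).continuous.sub continuous_id).inner continuous_id)
      ((continuous_integral_sq_mul (hbd.sub (memLp_const 1))).div_const 2)) fun s => ?_
  set φ := Lp.simpleFunc.toSimpleFunc s
  have hφ : toL2 μ φ = s := by
    rw [← toL2_congr (Lp.memLp _) (Lp.simpleFunc.toSimpleFunc_eq_toFun s).symm, toL2_coeFn]
  obtain ⟨C, hC⟩ := φ.exists_forall_norm_le
  have hsq : MemLp (fun x => φ x ^ 2) 2 μ := by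
    simpa [Function.comp_def] using (φ.map (· ^ 2)).memLp_of_isFiniteMeasure 2 μ
  calc ⟪sg.T t s - s, (s : Lp ℝ 2 μ)⟫
      ≤ ⟪toL2 μ (fun x => φ x ^ 2), sg.dual t (toL2 μ (one E)) - toL2 μ (one E)⟫ / 2 := by
        rw [← hφ]
        exact inner_T_sub_le hq ht φ.measurable hC
    _ = (∫ x, (s : Lp ℝ 2 μ) x ^ 2 * (sg.Tf' t (one E) x - 1) ∂μ) / 2 := by
        rw [inner_toL2_left hsq]
        congr 1
        refine integral_congr_ae ?_
        filter_upwards [Lp.simpleFunc.toSimpleFunc_eq_toFun s,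
          Lp.coeFn_sub (sg.dual t (toL2 μ (one E))) (toL2 μ (one E)),
          coeFn_toL2 (φ := one E) (memLp_const 1)] with x hs hsub hone
        rw [hs, hsub, Pi.sub_apply, hone, one, Tf']

end Semigroup2

section hatS

variable {μ : Measure E} (sg : Semigroup2 μ)

lemma hatS_self_eq {u : E → ℝ} (hu : MemLp u 2 μ) :
    hatS sg u u = -⟪sg.gen (toL2 μ u), toL2 μ u⟫
      + (∫ x, toL2 μ u x ^ 2 * sg.Af' (one E) x ∂μ) / 2 := by
  rw [hatS, Semigroup2.S, ip, ip, inner_toL2_right _ hu, ← integral_neg]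
  congr 1
  · simp only [Semigroup2.Af, neg_mul]
  · rw [one_div_mul_eq_div]
    congr 1
    refine integral_congr_ae ?_
    filter_upwards [coeFn_toL2 hu] with x hx
    rw [hx]
    ring

lemma hatS_nonneg_of_approx (ha : MemLp (sg.Af' (one E)) ∞ μ) {u : E → ℝ} (hu : MemLp u 2 μ)
    (happrox : ∀ ε > 0, ∃ f : E → ℝ, MemLp f 2 μ ∧ 0 ≤ hatS sg f f ∧
      ip μ (fun x => u x - f x) (fun x => u x - f x)
        + ip μ (fun x => sg.Af u x - sg.Af f x) (fun x => sg.Af u x - sg.Af f x) < ε) :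
    0 ≤ hatS sg u u := by
  set Φ : Lp ℝ 2 μ × Lp ℝ 2 μ → ℝ :=
    fun p => -⟪p.2, p.1⟫ + (∫ x, p.1 x ^ 2 * sg.Af' (one E) x ∂μ) / 2
  have hΦ : Continuous Φ := (continuous_snd.inner continuous_fst).neg.add
    (((continuous_integral_sq_mul ha).comp continuous_fst).div_const 2)
  have hgraph : ∀ {f}, MemLp f 2 μ → hatS sg f f = Φ (toL2 μ f, sg.gen (toL2 μ f)) :=
    fun hf => hatS_self_eq sg hf
  rw [hgraph hu]
  refine (isClosed_le continuous_const hΦ).closure_subset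
    (Metric.mem_closure_iff.2 fun ε hε => ?_)
  obtain ⟨f, hf, hf0, hfε⟩ := happrox (ε ^ 2) (by positivity)
  refine ⟨(toL2 μ f, sg.gen (toL2 μ f)), show 0 ≤ Φ _ from hgraph hf ▸ hf0, ?_⟩
  set U := toL2 μ u
  set F := toL2 μ f
  have hsub : (fun x => u x - f x) =ᵐ[μ] ⇑(U - F) := by
    filter_upwards [Lp.coeFn_sub U F, coeFn_toL2 hu, coeFn_toL2 hf] with x hUF hU hF
    rw [hUF, Pi.sub_apply, hU, hF]
  have hgen : (fun x => sg.Af u x - sg.Af f x) =ᵐ[μ] ⇑(sg.gen U - sg.gen F) :=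
    (Lp.coeFn_sub _ _).symm
  rw [ip_self_eq_norm_sq hsub, ip_self_eq_norm_sq hgen] at hfε
  rw [Prod.dist_eq, max_lt_iff, dist_eq_norm, dist_eq_norm]
  constructor <;> refine lt_of_pow_lt_pow_left₀ 2 hε.le ?_ <;>
    nlinarith [sq_nonneg ‖U - F‖, sq_nonneg ‖sg.gen U - sg.gen F‖]

variable [IsProbabilityMeasure μ] {sg} {q : ℝ → ProbabilityTheory.Kernel E E}
  [∀ t, ProbabilityTheory.IsMarkovKernel (q t)]

lemma hatS_nonneg_of_memLp_top (hq : sg.IsGivenByKernel q) (h1 : sg.memD' (one E))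
    {u : E → ℝ} (hu : MemLp u ∞ μ) (hD : sg.memD u) : 0 ≤ hatS sg u u := by
  obtain ⟨v, hm, ⟨C, hC⟩, huv⟩ := hu.exists_bounded_measurable_ae_eq
  have hu2 : MemLp u 2 μ := hu.mono_exponent le_top
  have hv : toL2 μ u = toL2 μ v := toL2_congr hu2 huv
  have hsq : MemLp (fun x => v x ^ 2) 2 μ :=
    .of_bound (hm.pow_const 2).aestronglyMeasurable (C ^ 2)
      (.of_forall fun x => by simpa [abs_pow] using pow_le_pow_left₀ (abs_nonneg _) (hC x) 2)
  set U := toL2 μ v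
  set SQ := toL2 μ (fun x => v x ^ 2)
  set o := toL2 μ (one E)
  have key : ⟪sg.gen U, U⟫ ≤ ⟪SQ, sg.gen' o⟫ / 2 := by
    refine sg.inner_gen_le_of_inner_T_sub_le (hv ▸ hD)
      ((tendsto_const_nhds.inner (sg.tendsto_gen' h1)).div_const 2) fun t ht => ?_
    calc ⟪sg.T t U - U, U⟫ ≤ ⟪SQ, sg.dual t o - o⟫ / 2 :=
          Semigroup2.inner_T_sub_le hq ht.le hm hC
      _ = t * (⟪SQ, t⁻¹ • (sg.dual t o - o)⟫ / 2) := by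
        rw [real_inner_smul_right]
        field_simp
  have hSQ : ⟪SQ, sg.gen' o⟫ = ∫ x, U x ^ 2 * sg.Af' (one E) x ∂μ := by
    rw [inner_toL2_left hsq]
    refine integral_congr_ae ?_
    filter_upwards [coeFn_toL2 (hu2.ae_eq huv)] with x hx
    rw [hx, Semigroup2.Af']
  rw [hatS_self_eq sg hu2, hv]
  linarith

lemma hatS_nonneg_of_tendsto_eLpNorm_top (hq : sg.IsGivenByKernel q)
    (hbd : ∀ t : ℝ, 0 ≤ t → MemLp (sg.Tf' t (one E)) ∞ μ)
    (hlim : Tendsto (fun t : ℝ =>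
        eLpNorm (fun x => t⁻¹ * (sg.Tf' t (one E) x - 1) - sg.Af' (one E) x) ∞ μ)
      (𝓝[>] 0) (𝓝 0))
    {u : E → ℝ} (hu : MemLp u 2 μ) (hD : sg.memD u) : 0 ≤ hatS sg u u := by
  set a := sg.Af' (one E)
  set g : ℝ → E → ℝ := fun t x => t⁻¹ * (sg.Tf' t (one E) x - 1)
  have hg : ∀ t, AEStronglyMeasurable (g t) μ := fun t =>
    ((Lp.aestronglyMeasurable _).sub aestronglyMeasurable_const).const_mul _
  have ha : MemLp a ∞ μ := by
    obtain ⟨t, hfin, ht⟩ :=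
      ((hlim.eventually_lt_const ENNReal.zero_lt_top).and self_mem_nhdsWithin).exists
    have hgt : MemLp (g t) ∞ μ := ((hbd t (le_of_lt ht)).sub (memLp_const 1)).const_mul _
    have hdiff : MemLp (fun x => g t x - a x) ∞ μ :=
      ⟨(hg t).sub (Lp.aestronglyMeasurable _), hfin⟩
    exact (hgt.sub hdiff).ae_eq (.of_forall fun x => by simp)
  set U := toL2 μ u
  have key : ⟪sg.gen U, U⟫ ≤ (∫ x, U x ^ 2 * a x ∂μ) / 2 := by
    refine sg.inner_gen_le_of_inner_T_sub_le hD ((tendsto_integral_mul_of_tendsto_eLpNorm_top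
      (Lp.memLp U).integrable_sq ha hg hlim).div_const 2) fun t ht => ?_
    calc ⟪sg.T t U - U, U⟫ ≤ (∫ x, U x ^ 2 * (sg.Tf' t (one E) x - 1) ∂μ) / 2 :=
          Semigroup2.inner_T_sub_le_integral hq ht.le (hbd t ht.le) U
      _ = t * ((∫ x, U x ^ 2 * g t x ∂μ) / 2) := by
        rw [← mul_div_assoc, ← integral_const_mul]
        congr 1
        refine integral_congr_ae (.of_forall fun x => ?_)
        simp only [g]
        field_simp
  rw [hatS_self_eq sg hu]
  linarith

end hatS

/-- Lemma 2.11: let the (not necessarily contractive) strongly continuous semigroups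
`T_{n,t}` and `T_t` be given by transition probability kernels, and assume conditions
(c6)(i), (c6)(ii) and (c6)(iv).  Then the perturbed forms are nonnegative:
`Ŝₙ(uₙ, uₙ) ≥ 0` for every `n ≥ 1` and `uₙ ∈ D(Sₙ)`, and `Ŝ(u, u) ≥ 0` for every
`u ∈ D(S)`. -/
theorem hatS_nonneg (fr : Frame0 E) (sg : ∀ n, Semigroup2 (fr.ν n))
    (p : ℕ → ℝ → ProbabilityTheory.Kernel E E)
    (hMarkov : ∀ n t, ProbabilityTheory.IsMarkovKernel (p n t))
    (hkernel : ∀ n, ∀ t : ℝ, 0 ≤ t → ∀ f : E → ℝ, Measurable f →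
      (∃ C : ℝ, ∀ x, |f x| ≤ C) →
      (sg n).Tf t f =ᵐ[fr.ν n] fun x => ∫ y, f y ∂((p n t) x))
    -- condition (c6)(i)
    (h_one_dom : ∀ n, (sg n).memD' (one E))
    (h_one_bdd : ∃ M : ℝ, ∀ n, 1 ≤ n →
      eLpNorm ((sg n).Af' (one E)) ⊤ (fr.ν n) ≤ ENNReal.ofReal M)
    -- condition (c6)(ii)
    (hT'1_bdd : ∀ t : ℝ, 0 ≤ t → MemLp ((sg 0).Tf' t (one E)) ⊤ (fr.ν 0))
    (hT'1_lim : Tendsto (fun t : ℝ =>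
        eLpNorm (fun x => t⁻¹ * ((sg 0).Tf' t (one E) x - 1) - (sg 0).Af' (one E) x)
          ⊤ (fr.ν 0))
      (𝓝[>] (0:ℝ)) (𝓝 0))
    -- condition (c6)(iv)
    (hdense : ∀ n, 1 ≤ n → ∃ Dn : Set (E → ℝ),
      (∀ f ∈ Dn, MemLp f 2 (fr.ν n) ∧ MemLp f ⊤ (fr.ν n) ∧ (sg n).memD f) ∧
      (∀ u : E → ℝ, MemLp u 2 (fr.ν n) → (sg n).memD u → ∀ ε : ℝ, 0 < ε →
        ∃ f ∈ Dn,
          ip (fr.ν n) (fun x => u x - f x) (fun x => u x - f x)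
            + ip (fr.ν n) (fun x => (sg n).Af u x - (sg n).Af f x)
                (fun x => (sg n).Af u x - (sg n).Af f x) < ε)) :
    (∀ n, 1 ≤ n → ∀ u : E → ℝ, MemLp u 2 (fr.ν n) → (sg n).memD u →
      0 ≤ hatS (sg n) u u) ∧
    (∀ u : E → ℝ, MemLp u 2 (fr.ν 0) → (sg 0).memD u → 0 ≤ hatS (sg 0) u u) := by
  have := fr.prob
  have := hMarkov
  refine ⟨fun n hn u hu hD => ?_, fun u hu hD =>
    hatS_nonneg_of_tendsto_eLpNorm_top (hkernel 0) hT'1_bdd hT'1_lim hu hD⟩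
  obtain ⟨M, hM⟩ := h_one_bdd
  obtain ⟨Dn, hDn, happrox⟩ := hdense n hn
  refine hatS_nonneg_of_approx (sg n)
    ⟨Lp.aestronglyMeasurable _, (hM n hn).trans_lt ENNReal.ofReal_lt_top⟩ hu fun ε hε => ?_
  obtain ⟨f, hf, hfε⟩ := happrox u hu hD ε hε
  obtain ⟨hf2, hf_top, hfD⟩ := hDn f hf
  exact ⟨f, hf2, hatS_nonneg_of_memLp_top (hkernel n) (h_one_dom n) hf_top hfD, hfε⟩

end Mosco
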